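/- Let κ ∈ ℝ with κ ≠ 1 and κ ≠ −6, and let T and C be 3-forms on ℝ⁸ satisfying J₃(T) = J₃(C) − κ C. Then C is uniquely determined by T, namely (6 − 5κ − κ²) C = 6 T + κ J₃(T). In particular for κ = 0 one has C = T, and for κ = −2 one has C = ½ T − (1/6) J₃(T). -/
import Mathlib


namespace Spin7

noncomputable section

/-- Kronecker delta on `Fin 8`. -/
def kron (i j : Fin 8) : ℝ := if i = j then 1 else 0

/-- A 2-form: totally antisymmetric 2-tensor. -/
def Alt2 (β : Fin 8 → Fin 8 → ℝ) : Prop := ∀ i j, β i j = -β j i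

/-- A 3-form: totally antisymmetric 3-tensor. -/
def Alt3 (γ : Fin 8 → Fin 8 → Fin 8 → ℝ) : Prop :=
  ∀ i j k, γ i j k = -γ j i k ∧ γ i j k = -γ i k j

/-- A 4-form: totally antisymmetric 4-tensor. -/
def Alt4 (Φ : Fin 8 → Fin 8 → Fin 8 → Fin 8 → ℝ) : Prop :=
  ∀ i j k l, Φ i j k l = -Φ j i k l ∧ Φ i j k l = -Φ i k j l ∧ Φ i j k l = -Φ i j l k

/-- The Cayley contraction identity for a 4-form `Φ`. -/
def Cayley (Φ : Fin 8 → Fin 8 → Fin 8 → Fin 8 → ℝ) : Prop :=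
  ∀ i j k a b c : Fin 8,
    (∑ p, Φ i j k p * Φ a b c p) =
      kron i a * kron j b * kron k c + kron i b * kron j c * kron k a
        + kron i c * kron j a * kron k b
      - kron i a * kron j c * kron k b - kron i c * kron j b * kron k a
      - kron i b * kron j a * kron k c
      - kron i a * Φ j k b c - kron j a * Φ k i b c - kron k a * Φ i j b c
      - kron i b * Φ j k c a - kron j b * Φ k i c a - kron k b * Φ i j c a
      - kron i c * Φ j k a b - kron j c * Φ k i a b - kron k c * Φ i j a b

/-- The operator J₂ on 2-forms: `J₂(β)_{ij} = ½ Φ_{ijab} β_{ab}`. -/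
def J2 (Φ : Fin 8 → Fin 8 → Fin 8 → Fin 8 → ℝ) (β : Fin 8 → Fin 8 → ℝ) :
    Fin 8 → Fin 8 → ℝ :=
  fun i j => (1/2 : ℝ) * ∑ a, ∑ b, Φ i j a b * β a b

/-- π₇ = ¼(Id − J₂). -/
def pi7 (Φ : Fin 8 → Fin 8 → Fin 8 → Fin 8 → ℝ) (β : Fin 8 → Fin 8 → ℝ) :
    Fin 8 → Fin 8 → ℝ :=
  fun i j => (1/4 : ℝ) * (β i j - J2 Φ β i j)

/-- π₂₁ = ¼(3·Id + J₂). -/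
def pi21 (Φ : Fin 8 → Fin 8 → Fin 8 → Fin 8 → ℝ) (β : Fin 8 → Fin 8 → ℝ) :
    Fin 8 → Fin 8 → ℝ :=
  fun i j => (1/4 : ℝ) * (3 * β i j + J2 Φ β i j)

/-- The operator J₃ on 3-forms. -/
def J3 (Φ : Fin 8 → Fin 8 → Fin 8 → Fin 8 → ℝ) (γ : Fin 8 → Fin 8 → Fin 8 → ℝ) :
    Fin 8 → Fin 8 → Fin 8 → ℝ :=
  fun i j k => (1/2 : ℝ) *
    ∑ p, ∑ q, (Φ i j p q * γ k p q + Φ j k p q * γ i p q + Φ k i p q * γ j p q)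

/-- π₈ = (1/7)(Id − J₃). -/
def pi8 (Φ : Fin 8 → Fin 8 → Fin 8 → Fin 8 → ℝ) (γ : Fin 8 → Fin 8 → Fin 8 → ℝ) :
    Fin 8 → Fin 8 → Fin 8 → ℝ :=
  fun i j k => (1/7 : ℝ) * (γ i j k - J3 Φ γ i j k)

/-- π₄₈ = (6/7)(Id + (1/6)J₃). -/
def pi48 (Φ : Fin 8 → Fin 8 → Fin 8 → Fin 8 → ℝ) (γ : Fin 8 → Fin 8 → Fin 8 → ℝ) :
    Fin 8 → Fin 8 → Fin 8 → ℝ :=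
  fun i j k => (6/7 : ℝ) * (γ i j k + (1/6 : ℝ) * J3 Φ γ i j k)

/-- The operator J₄ on 4-forms. -/
def J4 (Φ σ : Fin 8 → Fin 8 → Fin 8 → Fin 8 → ℝ) :
    Fin 8 → Fin 8 → Fin 8 → Fin 8 → ℝ :=
  fun i j k l => (1/2 : ℝ) * ∑ p, ∑ q,
    (Φ i j p q * σ p q k l + Φ k i p q * σ p q j l + Φ i l p q * σ p q j k
      + Φ k l p q * σ p q i j + Φ j l p q * σ p q k i + Φ j k p q * σ p q i l)

/-- Antisymmetrization with weight 1/4! over four `Fin 8` indices. -/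
def asym4 (g : Fin 8 → Fin 8 → Fin 8 → Fin 8 → ℝ) (i j k l : Fin 8) : ℝ :=
  (1/24 : ℝ) * ∑ τ : Equiv.Perm (Fin 4),
    ((Equiv.Perm.sign τ : ℤ) : ℝ) *
      g (![i, j, k, l] (τ 0)) (![i, j, k, l] (τ 1)) (![i, j, k, l] (τ 2)) (![i, j, k, l] (τ 3))

/-- Simultaneous antisymmetrization (weight 1/4! each) over a lower group of four
indices and an upper group of four indices. -/
def asym44 (F : Fin 8 → Fin 8 → Fin 8 → Fin 8 → Fin 8 → Fin 8 → Fin 8 → Fin 8 → ℝ)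
    (i j k l a b c d : Fin 8) : ℝ :=
  asym4 (fun i' j' k' l' => asym4 (F i' j' k' l') a b c d) i j k l

/-- The projector π₂₇ on 4-forms. -/
def pi27 (Φ σ : Fin 8 → Fin 8 → Fin 8 → Fin 8 → ℝ) :
    Fin 8 → Fin 8 → Fin 8 → Fin 8 → ℝ :=
  fun i j k l => (3/32 : ℝ) *
    (asym4 (fun i' j' k' l' =>
        ∑ a, ∑ b, ∑ c, ∑ d, Φ i' j' a b * Φ k' l' c d * σ a b c d) i j k l
      - 4 * asym4 (fun i' j' k' l' => ∑ a, ∑ b, Φ i' j' a b * σ k' l' a b) i j k l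
      - (1/7 : ℝ) * Φ i j k l * (∑ a, ∑ b, ∑ c, ∑ d, Φ a b c d * σ a b c d)
      + 4 * σ i j k l)

/-- The map `K(H)_{ijkl} = H_{ip}Φ_{pjkl} − H_{jp}Φ_{pikl} + H_{kp}Φ_{pijl} − H_{lp}Φ_{pijk}`. -/
def Kmap (Φ : Fin 8 → Fin 8 → Fin 8 → Fin 8 → ℝ) (H : Fin 8 → Fin 8 → ℝ) :
    Fin 8 → Fin 8 → Fin 8 → Fin 8 → ℝ :=
  fun i j k l => ∑ p,
    (H i p * Φ p j k l - H j p * Φ p i k l + H k p * Φ p i j l - H l p * Φ p i j k)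

/-- The map `K'(σ)_{ij} = ½ Φ_{ipqr} σ_{jpqr} − ½ Φ_{jpqr} σ_{ipqr}`. -/
def Kprime (Φ σ : Fin 8 → Fin 8 → Fin 8 → Fin 8 → ℝ) : Fin 8 → Fin 8 → ℝ :=
  fun i j => (1/2 : ℝ) * ∑ p, ∑ q, ∑ r, (Φ i p q r * σ j p q r - Φ j p q r * σ i p q r)

/-- The totally antisymmetric Levi-Civita symbol on 8 indices with `ε_{12345678} = 1`. -/
def eps8 (v : Fin 8 → Fin 8) : ℝ :=
  Matrix.det (Matrix.of fun r c => if v r = c then (1 : ℝ) else 0)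

/-- Self-duality of the 4-form `Φ`. -/
def SelfDual (Φ : Fin 8 → Fin 8 → Fin 8 → Fin 8 → ℝ) : Prop :=
  ∀ i j k l, (1/24 : ℝ) *
    (∑ a, ∑ b, ∑ c, ∑ d, eps8 ![i, j, k, l, a, b, c, d] * Φ a b c d) = Φ i j k l

/-- Antisymmetrization with weight 1/5! over five `Fin 8` indices. -/
def asym5 (g : Fin 8 → Fin 8 → Fin 8 → Fin 8 → Fin 8 → ℝ) (a i j k l : Fin 8) : ℝ :=
  (1/120 : ℝ) * ∑ τ : Equiv.Perm (Fin 5),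
    ((Equiv.Perm.sign τ : ℤ) : ℝ) *
      g (![a, i, j, k, l] (τ 0)) (![a, i, j, k, l] (τ 1)) (![a, i, j, k, l] (τ 2))
        (![a, i, j, k, l] (τ 3)) (![a, i, j, k, l] (τ 4))

variable {Φ : Fin 8 → Fin 8 → Fin 8 → Fin 8 → ℝ}

lemma kron_symm (a b : Fin 8) : kron a b = kron b a := by
  simp [kron, eq_comm]

section perms
variable (hΦ : Alt4 Φ)
include hΦ
lemma p12 (a b c d) : Φ a b c d = -Φ b a c d := (hΦ a b c d).1
lemma p23 (a b c d) : Φ a b c d = -Φ a c b d := (hΦ a b c d).2.1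
lemma p34 (a b c d) : Φ a b c d = -Φ a b d c := (hΦ a b c d).2.2
lemma p13 (a b c d) : Φ a b c d = -Φ c b a d := by
  rw [p12 hΦ, p23 hΦ, p12 hΦ]; ring
lemma p24 (a b c d) : Φ a b c d = -Φ a d c b := by
  rw [p34 hΦ, p23 hΦ, p34 hΦ]; ring
lemma p14 (a b c d) : Φ a b c d = -Φ d b c a := by
  rw [p13 hΦ, p34 hΦ, p13 hΦ]; ring
lemma pEven (a b c d) : Φ a b c d = Φ c d a b := by
  rw [p13 hΦ, p24 hΦ]; ring
lemma z12 (a c d) : Φ a a c d = 0 := by have := p12 hΦ a a c d; linarith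
lemma z13 (a b d) : Φ a b a d = 0 := by have := p13 hΦ a b a d; linarith
lemma z14 (a b c) : Φ a b c a = 0 := by have := p14 hΦ a b c a; linarith
lemma z23 (a b d) : Φ a b b d = 0 := by have := p23 hΦ a b b d; linarith
lemma z24 (a b c) : Φ a b c b = 0 := by have := p24 hΦ a b c b; linarith
lemma z34 (a b c) : Φ a b c c = 0 := by have := p34 hΦ a b c c; linarith
end perms

lemma sumM (hΦ : Alt4 Φ) (hC : Cayley Φ) (i j r s : Fin 8) :
    (∑ p, ∑ q, Φ i j p q * Φ r s p q)
      = 6 * (kron i r * kron j s - kron i s * kron j r) - 4 * Φ i j r s := by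
  have h : ∀ p : Fin 8, (∑ q, Φ i j p q * Φ r s p q) =
      kron i r * kron j s * kron p p + kron i s * kron j p * kron p r
        + kron i p * kron j r * kron p s
      - kron i r * kron j p * kron p s - kron i p * kron j s * kron p r
      - kron i s * kron j r * kron p p
      - kron i r * Φ j p s p - kron j r * Φ p i s p - kron p r * Φ i j s p
      - kron i s * Φ j p p r - kron j s * Φ p i p r - kron p s * Φ i j p r
      - kron i p * Φ j p r s - kron j p * Φ p i r s - kron p p * Φ i j r s :=
    fun p => hC i j p r s p
  rw [Finset.sum_congr rfl fun p _ => h p]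
  simp only [z24 hΦ, z14 hΦ, z23 hΦ, z13 hΦ, mul_zero, sub_zero]
  simp only [Finset.sum_sub_distrib, Finset.sum_add_distrib]
  simp only [kron, mul_ite, ite_mul, one_mul, mul_one, zero_mul, mul_zero, if_pos rfl]
  simp only [Finset.sum_ite_eq, Finset.sum_ite_eq', Finset.mem_univ, if_true,
    Finset.sum_const, Finset.card_univ, Fintype.card_fin, nsmul_eq_mul]
  rw [p34 hΦ i j s r, p12 hΦ j i r s]
  ring_nf

lemma sum_comm8 (f : Fin 8 → Fin 8 → ℝ) : ∑ a, ∑ b, f a b = ∑ b, ∑ a, f a b :=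
  Finset.sum_comm

lemma rot3 (f : Fin 8 → Fin 8 → Fin 8 → ℝ) :
    ∑ a, ∑ b, ∑ c, f a b c = ∑ b, ∑ c, ∑ a, f a b c := by
  rw [Finset.sum_comm]
  exact Finset.sum_congr rfl fun b _ => Finset.sum_comm

lemma rot4a (f : Fin 8 → Fin 8 → Fin 8 → Fin 8 → ℝ) :
    ∑ a, ∑ b, ∑ c, ∑ d, f a b c d = ∑ b, ∑ c, ∑ d, ∑ a, f a b c d := by
  rw [Finset.sum_comm]
  exact Finset.sum_congr rfl fun b _ => rot3 _

lemma rot4 (f : Fin 8 → Fin 8 → Fin 8 → Fin 8 → ℝ) :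
    ∑ a, ∑ b, ∑ c, ∑ d, f a b c d = ∑ c, ∑ d, ∑ a, ∑ b, f a b c d := by
  rw [rot4a, rot4a]

lemma d1 (f : Fin 8 → ℝ) (b : Fin 8) : ∑ s, kron b s * f s = f b := by
  simp [kron, ite_mul]

lemma dd (f : Fin 8 → Fin 8 → ℝ) (a b : Fin 8) :
    ∑ r, ∑ s, kron a r * (kron b s * f r s) = f a b := by
  have h : ∀ r, ∑ s, kron a r * (kron b s * f r s) = kron a r * f r b := by
    intro r; rw [← Finset.mul_sum, d1 (fun s => f r s) b]
  rw [Finset.sum_congr rfl fun r _ => h r]; exact d1 (fun r => f r b) a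

lemma pull (c : ℝ) (f : Fin 8 → Fin 8 → ℝ) :
    ∑ r, ∑ s, c * f r s = c * ∑ r, ∑ s, f r s := by
  rw [Finset.mul_sum]
  exact Finset.sum_congr rfl fun r _ => (Finset.mul_sum _ _ _).symm

lemma T2val (hΦ : Alt4 Φ) (hC : Cayley Φ) {γ : Fin 8 → Fin 8 → Fin 8 → ℝ}
    (hγ : Alt3 γ) (i j k : Fin 8) :
    (∑ p, ∑ q, ∑ r, ∑ s, Φ i j p q * (Φ p q r s * γ k r s))
      = 12 * γ i j k - 4 * ∑ p, ∑ q, Φ i j p q * γ k p q := by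
  have g12 : ∀ a b c, γ a b c = -γ b a c := fun a b c => (hγ a b c).1
  have g23 : ∀ a b c, γ a b c = -γ a c b := fun a b c => (hγ a b c).2
  have step1 : (∑ p, ∑ q, ∑ r, ∑ s, Φ i j p q * (Φ p q r s * γ k r s))
      = ∑ r, ∑ s, ∑ p, ∑ q, γ k r s * (Φ i j p q * Φ r s p q) := by
    rw [rot4]
    refine Finset.sum_congr rfl fun r _ => Finset.sum_congr rfl fun s _ =>
      Finset.sum_congr rfl fun p _ => Finset.sum_congr rfl fun q _ => ?_
    rw [pEven hΦ p q r s]; ring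
  rw [step1]
  have step2 : ∀ r s : Fin 8, (∑ p, ∑ q, γ k r s * (Φ i j p q * Φ r s p q))
      = γ k r s * (6 * (kron i r * kron j s - kron i s * kron j r) - 4 * Φ i j r s) := by
    intro r s
    rw [← sumM hΦ hC i j r s, Finset.mul_sum]
    exact Finset.sum_congr rfl fun p _ => (Finset.mul_sum _ _ _).symm
  rw [Finset.sum_congr rfl fun r _ => Finset.sum_congr rfl fun s _ => step2 r s]
  have expand : ∀ r s : Fin 8,
      γ k r s * (6 * (kron i r * kron j s - kron i s * kron j r) - 4 * Φ i j r s)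
      = (6:ℝ) * (kron i r * (kron j s * γ k r s)) - (6:ℝ) * (kron j r * (kron i s * γ k r s))
        - (4:ℝ) * (Φ i j r s * γ k r s) := by intro r s; ring
  rw [Finset.sum_congr rfl fun r _ => Finset.sum_congr rfl fun s _ => expand r s]
  simp only [Finset.sum_sub_distrib]
  rw [pull 6 (fun r s => kron i r * (kron j s * γ k r s)),
      pull 6 (fun r s => kron j r * (kron i s * γ k r s)),
      pull 4 (fun r s => Φ i j r s * γ k r s),
      dd (fun r s => γ k r s) i j, dd (fun r s => γ k r s) j i]
  have h1 : γ k i j = γ i j k := by rw [g12 k i j, g23 i k j]; ring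
  have h2 : γ k j i = -γ i j k := by rw [g12 k j i, g23 j k i, g12 j i k]; ring
  rw [h1, h2]
  have h3 : (∑ r, ∑ s, Φ i j r s * γ k r s) = ∑ p, ∑ q, Φ i j p q * γ k p q := rfl
  rw [h3]; ring

lemma pull3 (c : ℝ) (f : Fin 8 → Fin 8 → Fin 8 → ℝ) :
    ∑ q, ∑ r, ∑ s, c * f q r s = c * ∑ q, ∑ r, ∑ s, f q r s := by
  rw [Finset.mul_sum]
  exact Finset.sum_congr rfl fun q _ => pull c (f q)

lemma evQ (F : Fin 8 → Fin 8 → Fin 8 → ℝ) (a : Fin 8) :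
    ∑ q, ∑ r, ∑ s, kron a q * F q r s = ∑ r, ∑ s, F a r s := by
  rw [Finset.sum_congr rfl fun q _ => pull (kron a q) (F q)]
  exact d1 (fun q => ∑ r, ∑ s, F q r s) a

lemma evR (F : Fin 8 → Fin 8 → Fin 8 → ℝ) (a : Fin 8) :
    ∑ q, ∑ r, ∑ s, kron a r * F q r s = ∑ q, ∑ s, F q a s := by
  refine Finset.sum_congr rfl fun q _ => ?_
  rw [Finset.sum_congr rfl fun r _ => (Finset.mul_sum _ _ _).symm]
  exact d1 (fun r => ∑ s, F q r s) a

lemma evS (F : Fin 8 → Fin 8 → Fin 8 → ℝ) (a : Fin 8) :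
    ∑ q, ∑ r, ∑ s, kron a s * F q r s = ∑ q, ∑ r, F q r a :=
  Finset.sum_congr rfl fun q _ => Finset.sum_congr rfl fun r _ => d1 (F q r) a

lemma evQS (G : Fin 8 → Fin 8 → ℝ) :
    ∑ q, ∑ s, kron q s * G q s = ∑ q, G q q :=
  Finset.sum_congr rfl fun q _ => d1 (G q) q

lemma evQR3 (G : Fin 8 → Fin 8 → Fin 8 → ℝ) :
    ∑ q, ∑ r, ∑ s, kron q r * G q r s = ∑ q, ∑ s, G q q s := by
  refine Finset.sum_congr rfl fun q _ => ?_
  rw [Finset.sum_congr rfl fun r _ => (Finset.mul_sum _ _ _).symm]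
  exact d1 (fun r => ∑ s, G q r s) q

lemma evQS3 (G : Fin 8 → Fin 8 → Fin 8 → ℝ) :
    ∑ q, ∑ r, ∑ s, kron q s * G q r s = ∑ q, ∑ r, G q r q :=
  Finset.sum_congr rfl fun q _ => Finset.sum_congr rfl fun r _ => d1 (G q r) q

section gam
variable {γ : Fin 8 → Fin 8 → Fin 8 → ℝ} (hγ : Alt3 γ)
include hγ
lemma g12 (a b c) : γ a b c = -γ b a c := (hγ a b c).1
lemma g23 (a b c) : γ a b c = -γ a c b := (hγ a b c).2
lemma g13 (a b c) : γ a b c = -γ c b a := by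
  rw [g12 hγ, g23 hγ, g12 hγ]; ring
lemma gcyc (a b c) : γ a b c = γ b c a := by
  rw [g12 hγ, g23 hγ]; ring
lemma gz12 (a c) : γ a a c = 0 := by have := g12 hγ a a c; linarith
lemma gz13 (a b) : γ a b a = 0 := by have := g13 hγ a b a; linarith
lemma gz23 (a b) : γ a b b = 0 := by have := g23 hγ a b b; linarith
end gam

lemma T1val (hΦ : Alt4 Φ) (hC : Cayley Φ) {γ : Fin 8 → Fin 8 → Fin 8 → ℝ}
    (hγ : Alt3 γ) (i j k : Fin 8) :
    (∑ p, ∑ q, ∑ r, ∑ s, Φ i j p q * (Φ k p r s * γ q r s))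
      = -2 * γ i j k
        + kron i k * (∑ a, ∑ b, ∑ c, Φ j a b c * γ a b c)
        - kron j k * (∑ a, ∑ b, ∑ c, Φ i a b c * γ a b c)
        + (∑ a, ∑ b, Φ i j a b * γ k a b)
        - 2 * (∑ a, ∑ b, Φ j k a b * γ i a b)
        - 2 * (∑ a, ∑ b, Φ k i a b * γ j a b) := by
  have inner : ∀ q r s : Fin 8, (∑ p, Φ i j p q * (Φ k p r s * γ q r s)) =
      -(kron i k * (kron j r * (kron q s * γ q r s)))
      - kron k q * (kron i r * (kron j s * γ q r s))
      - kron j k * (kron i s * (kron q r * γ q r s))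
      + kron i k * (kron j s * (kron q r * γ q r s))
      + kron k q * (kron j r * (kron i s * γ q r s))
      + kron j k * (kron i r * (kron q s * γ q r s))
      + kron i k * (Φ j q r s * γ q r s)
      - kron j k * (Φ i q r s * γ q r s)
      + kron k q * (Φ i j r s * γ q r s)
      - kron i r * (Φ j k q s * γ r q s)
      - kron j r * (Φ k i q s * γ r q s)
      + kron q r * (Φ i j s k * γ q r s)
      - kron i s * (Φ j k q r * γ s q r)
      - kron j s * (Φ k i q r * γ s q r)
      + kron q s * (Φ i j k r * γ q r s) := by
    intro q r s
    have e1 : ∀ p, Φ i j p q * (Φ k p r s * γ q r s)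
        = -γ q r s * (Φ i j q p * Φ k r s p) := by
      intro p
      rw [p34 hΦ i j p q, p23 hΦ k p r s, p34 hΦ k r p s]; ring
    rw [Finset.sum_congr rfl fun p _ => e1 p, ← Finset.mul_sum, hC i j q k r s]
    rw [p12 hΦ q i r s, p12 hΦ q i s k, p34 hΦ i q s k, p23 hΦ i q k s, p12 hΦ i k q s,
        p12 hΦ q i k r, p23 hΦ i q k r, p12 hΦ i k q r]
    have hJ1 : Φ j q s k = Φ j k q s := by
      rw [p34 hΦ j q s k, p23 hΦ j q k s]; ring
    have hJ2 : Φ j q k r = -Φ j k q r := p23 hΦ j q k r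
    have hg1 : γ r q s = -γ q r s := g12 hγ r q s
    have hg2 : γ s q r = γ q r s := by rw [g12 hγ s q r, g23 hγ q s r]; ring
    rw [hJ1, hJ2, hg1, hg2, kron_symm q k]
    ring
  rw [rot4a, Finset.sum_congr rfl fun q _ => Finset.sum_congr rfl fun r _ =>
      Finset.sum_congr rfl fun s _ => inner q r s]
  simp only [Finset.sum_add_distrib, Finset.sum_sub_distrib, Finset.sum_neg_distrib]
  have h1 : ∑ q, ∑ r, ∑ s, kron i k * (kron j r * (kron q s * γ q r s)) = 0 := by
    rw [pull3 (kron i k) _, evR (fun q r s => kron q s * γ q r s) j,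
      evQS (fun q s => γ q j s)]
    simp [gz13 hγ]
  have h2 : ∑ q, ∑ r, ∑ s, kron k q * (kron i r * (kron j s * γ q r s)) = γ k i j := by
    rw [evQ (fun q r s => kron i r * (kron j s * γ q r s)) k]
    exact dd (fun r s => γ k r s) i j
  have h3 : ∑ q, ∑ r, ∑ s, kron j k * (kron i s * (kron q r * γ q r s)) = 0 := by
    rw [pull3 (kron j k) _, evS (fun q r s => kron q r * γ q r s) i,
      evQS (fun q r => γ q r i)]
    simp [gz12 hγ]
  have h4 : ∑ q, ∑ r, ∑ s, kron i k * (kron j s * (kron q r * γ q r s)) = 0 := by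
    rw [pull3 (kron i k) _, evS (fun q r s => kron q r * γ q r s) j,
      evQS (fun q r => γ q r j)]
    simp [gz12 hγ]
  have h5 : ∑ q, ∑ r, ∑ s, kron k q * (kron j r * (kron i s * γ q r s)) = γ k j i := by
    rw [evQ (fun q r s => kron j r * (kron i s * γ q r s)) k]
    exact dd (fun r s => γ k r s) j i
  have h6 : ∑ q, ∑ r, ∑ s, kron j k * (kron i r * (kron q s * γ q r s)) = 0 := by
    rw [pull3 (kron j k) _, evR (fun q r s => kron q s * γ q r s) i,
      evQS (fun q s => γ q i s)]
    simp [gz13 hγ]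
  have h7 : ∑ q, ∑ r, ∑ s, kron i k * (Φ j q r s * γ q r s)
      = kron i k * (∑ a, ∑ b, ∑ c, Φ j a b c * γ a b c) :=
    pull3 (kron i k) _
  have h8 : ∑ q, ∑ r, ∑ s, kron j k * (Φ i q r s * γ q r s)
      = kron j k * (∑ a, ∑ b, ∑ c, Φ i a b c * γ a b c) :=
    pull3 (kron j k) _
  have h9 : ∑ q, ∑ r, ∑ s, kron k q * (Φ i j r s * γ q r s)
      = ∑ a, ∑ b, Φ i j a b * γ k a b :=
    evQ (fun q r s => Φ i j r s * γ q r s) k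
  have h10 : ∑ q, ∑ r, ∑ s, kron i r * (Φ j k q s * γ r q s)
      = ∑ a, ∑ b, Φ j k a b * γ i a b :=
    evR (fun q r s => Φ j k q s * γ r q s) i
  have h11 : ∑ q, ∑ r, ∑ s, kron j r * (Φ k i q s * γ r q s)
      = ∑ a, ∑ b, Φ k i a b * γ j a b :=
    evR (fun q r s => Φ k i q s * γ r q s) j
  have h12 : ∑ q, ∑ r, ∑ s, kron q r * (Φ i j s k * γ q r s) = 0 := by
    rw [evQR3 (fun q r s => Φ i j s k * γ q r s)]
    simp [gz12 hγ]
  have h13 : ∑ q, ∑ r, ∑ s, kron i s * (Φ j k q r * γ s q r)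
      = ∑ a, ∑ b, Φ j k a b * γ i a b :=
    evS (fun q r s => Φ j k q r * γ s q r) i
  have h14 : ∑ q, ∑ r, ∑ s, kron j s * (Φ k i q r * γ s q r)
      = ∑ a, ∑ b, Φ k i a b * γ j a b :=
    evS (fun q r s => Φ k i q r * γ s q r) j
  have h15 : ∑ q, ∑ r, ∑ s, kron q s * (Φ i j k r * γ q r s) = 0 := by
    rw [evQS3 (fun q r s => Φ i j k r * γ q r s)]
    simp [gz13 hγ]
  rw [h1, h2, h3, h4, h5, h6, h7, h8, h9, h10, h11, h12, h13, h14, h15]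
  have e1 : γ k i j = γ i j k := by rw [gcyc hγ k i j]
  rw [e1]
  rw [show γ k j i = -γ i j k from by rw [g13 hγ i j k]; ring]
  ring

lemma T3val (hΦ : Alt4 Φ) (hC : Cayley Φ) {γ : Fin 8 → Fin 8 → Fin 8 → ℝ}
    (hγ : Alt3 γ) (i j k : Fin 8) :
    (∑ p, ∑ q, ∑ r, ∑ s, Φ i j p q * (Φ q k r s * γ p r s))
      = -2 * γ i j k
        + kron i k * (∑ a, ∑ b, ∑ c, Φ j a b c * γ a b c)
        - kron j k * (∑ a, ∑ b, ∑ c, Φ i a b c * γ a b c)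
        + (∑ a, ∑ b, Φ i j a b * γ k a b)
        - 2 * (∑ a, ∑ b, Φ j k a b * γ i a b)
        - 2 * (∑ a, ∑ b, Φ k i a b * γ j a b) := by
  have step : (∑ p, ∑ q, ∑ r, ∑ s, Φ i j p q * (Φ q k r s * γ p r s))
      = ∑ p, ∑ q, ∑ r, ∑ s, Φ i j p q * (Φ k p r s * γ q r s) := by
    rw [Finset.sum_comm]
    refine Finset.sum_congr rfl fun a _ => Finset.sum_congr rfl fun b _ =>
      Finset.sum_congr rfl fun r _ => Finset.sum_congr rfl fun s _ => ?_
    rw [p34 hΦ i j b a, p12 hΦ a k r s]; ring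
  rw [step]
  exact T1val hΦ hC hγ i j k

lemma Fval (hΦ : Alt4 Φ) (hC : Cayley Φ) {γ : Fin 8 → Fin 8 → Fin 8 → ℝ}
    (hγ : Alt3 γ) (i j k : Fin 8) :
    (∑ p, ∑ q, Φ i j p q * J3 Φ γ k p q)
      = 4 * γ i j k
        - (∑ a, ∑ b, Φ i j a b * γ k a b)
        - 2 * (∑ a, ∑ b, Φ j k a b * γ i a b)
        - 2 * (∑ a, ∑ b, Φ k i a b * γ j a b)
        + kron i k * (∑ a, ∑ b, ∑ c, Φ j a b c * γ a b c)
        - kron j k * (∑ a, ∑ b, ∑ c, Φ i a b c * γ a b c) := by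
  have hpt : ∀ p q : Fin 8, Φ i j p q * J3 Φ γ k p q
      = (1/2 : ℝ) * ((∑ r, ∑ s, Φ i j p q * (Φ k p r s * γ q r s))
        + (∑ r, ∑ s, Φ i j p q * (Φ p q r s * γ k r s))
        + (∑ r, ∑ s, Φ i j p q * (Φ q k r s * γ p r s))) := by
    intro p q
    have combine : ∀ r s : Fin 8,
        Φ i j p q * (Φ k p r s * γ q r s) + Φ i j p q * (Φ p q r s * γ k r s)
          + Φ i j p q * (Φ q k r s * γ p r s)
        = Φ i j p q * (Φ k p r s * γ q r s + Φ p q r s * γ k r s + Φ q k r s * γ p r s) := by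
      intro r s; ring
    simp only [J3, ← Finset.sum_add_distrib]
    rw [Finset.sum_congr rfl fun r _ => Finset.sum_congr rfl fun s _ => combine r s,
      pull (Φ i j p q) _]
    ring
  rw [Finset.sum_congr rfl fun p _ => Finset.sum_congr rfl fun q _ => hpt p q,
    pull (1/2 : ℝ) _]
  simp only [Finset.sum_add_distrib]
  rw [T1val hΦ hC hγ i j k, T2val hΦ hC hγ i j k, T3val hΦ hC hγ i j k]
  ring

lemma J3sq (hΦ : Alt4 Φ) (hC : Cayley Φ) {γ : Fin 8 → Fin 8 → Fin 8 → ℝ}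
    (hγ : Alt3 γ) (i j k : Fin 8) :
    J3 Φ (J3 Φ γ) i j k = 6 * γ i j k - 5 * J3 Φ γ i j k := by
  have e0 : J3 Φ (J3 Φ γ) i j k = (1/2 : ℝ) * ∑ p, ∑ q,
      (Φ i j p q * J3 Φ γ k p q + Φ j k p q * J3 Φ γ i p q + Φ k i p q * J3 Φ γ j p q) := rfl
  have e0' : J3 Φ γ i j k = (1/2 : ℝ) * ∑ p, ∑ q,
      (Φ i j p q * γ k p q + Φ j k p q * γ i p q + Φ k i p q * γ j p q) := rfl
  rw [e0, e0']
  simp only [Finset.sum_add_distrib]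
  rw [Fval hΦ hC hγ i j k, Fval hΦ hC hγ j k i, Fval hΦ hC hγ k i j]
  rw [show γ j k i = γ i j k from by rw [gcyc hγ j k i, gcyc hγ k i j],
    show γ k i j = γ i j k from gcyc hγ k i j,
    kron_symm j i, kron_symm k i, kron_symm k j]
  ring

lemma J3lin (f g : Fin 8 → Fin 8 → Fin 8 → ℝ) (c : ℝ) (i j k : Fin 8) :
    J3 Φ (fun a b d => f a b d - c * g a b d) i j k
      = J3 Φ f i j k - c * J3 Φ g i j k := by
  have pt : ∀ p q : Fin 8,
      Φ i j p q * (f k p q - c * g k p q) + Φ j k p q * (f i p q - c * g i p q)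
        + Φ k i p q * (f j p q - c * g j p q)
      = (Φ i j p q * f k p q + Φ j k p q * f i p q + Φ k i p q * f j p q)
        - c * (Φ i j p q * g k p q + Φ j k p q * g i p q + Φ k i p q * g j p q) := by
    intro p q; ring
  simp only [J3]
  rw [Finset.sum_congr rfl fun p _ => Finset.sum_congr rfl fun q _ => pt p q]
  simp only [Finset.sum_sub_distrib]
  rw [pull c _]
  ring

/-- if `J₃(T) = J₃(C) − κ C` with κ ≠ 1, κ ≠ −6, then C is uniquely
determined by T: `(6 − 5κ − κ²) C = 6 T + κ J₃(T)`; in particular for κ = 0 one has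
`C = T`, and for κ = −2 one has `C = ½ T − (1/6) J₃(T)`. -/
theorem C_from_T (Φ : Fin 8 → Fin 8 → Fin 8 → Fin 8 → ℝ)
    (hΦ : Alt4 Φ) (hCayley : Cayley Φ) :
    (∀ (κ : ℝ), κ ≠ 1 → κ ≠ -6 →
      ∀ T C : Fin 8 → Fin 8 → Fin 8 → ℝ, Alt3 T → Alt3 C →
        (∀ i j k, J3 Φ T i j k = J3 Φ C i j k - κ * C i j k) →
        ∀ i j k, (6 - 5 * κ - κ ^ 2) * C i j k = 6 * T i j k + κ * J3 Φ T i j k) ∧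
    (∀ T C : Fin 8 → Fin 8 → Fin 8 → ℝ, Alt3 T → Alt3 C →
      (∀ i j k, J3 Φ T i j k = J3 Φ C i j k - (0 : ℝ) * C i j k) →
      ∀ i j k, C i j k = T i j k) ∧
    (∀ T C : Fin 8 → Fin 8 → Fin 8 → ℝ, Alt3 T → Alt3 C →
      (∀ i j k, J3 Φ T i j k = J3 Φ C i j k - (-2 : ℝ) * C i j k) →
      ∀ i j k, C i j k = (1/2 : ℝ) * T i j k - (1/6 : ℝ) * J3 Φ T i j k) := by
  have main : ∀ (κ : ℝ), ∀ T C : Fin 8 → Fin 8 → Fin 8 → ℝ, Alt3 T → Alt3 C →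
      (∀ i j k, J3 Φ T i j k = J3 Φ C i j k - κ * C i j k) →
      ∀ i j k, (6 - 5 * κ - κ ^ 2) * C i j k = 6 * T i j k + κ * J3 Φ T i j k := by
    intro κ T C hT hC h i j k
    have hfun : J3 Φ T = fun a b d => J3 Φ C a b d - κ * C a b d := by
      funext a b d; exact h a b d
    have e4 : J3 Φ (J3 Φ T) i j k = J3 Φ (J3 Φ C) i j k - κ * J3 Φ C i j k := by
      rw [hfun, J3lin (fun a b d => J3 Φ C a b d) C κ i j k]
    have e1 := J3sq hΦ hCayley hT i j k
    have e2 := J3sq hΦ hCayley hC i j k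
    have e3 := h i j k
    linear_combination e1 - e2 - (5 + κ) * e3 - e4
  refine ⟨fun κ _ _ T C hT hC h i j k => main κ T C hT hC h i j k, ?_, ?_⟩
  · intro T C hT hC h i j k
    have := main 0 T C hT hC h i j k
    norm_num at this
    linarith
  · intro T C hT hC h i j k
    have := main (-2) T C hT hC h i j k
    norm_num at this
    linarith
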